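/- arXiv:1006.0808 — 8 statements merged into one kernel-verified Lean document; each statement's English description precedes it below -/
import Mathlib

section
/- The polynomials S_n defined by S_0(x)=1, S_1(x)=x, and S_{n+1}(x) = x·S_n(x) − n²·S_{n−1}(x) satisfy the explicit formula S_n(x) = i^n · n! · Σ_{k=0}^{n} ((−1)^k / k!) · C(n,k) · Π_{j=0}^{k−1} (i x + 1 + 2j). -/
/-!
Write `y = i x`. The closed form is `iⁿ n! Aₙ(y)` with `Aₙ(y) = ₂F₁(-n, (1 + y)/2; 1; 2)`, and the
recurrence for `Sₙ` becomes `(n + 2) Aₙ₊₂ + y Aₙ₊₁ - (n + 1) Aₙ = 0`. Using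
`y ∏_{j<k} (y + 1 + 2j) = ∏_{j<k+1} (y + 1 + 2j) - (2k + 1) ∏_{j<k} (y + 1 + 2j)` and the binomial
identity `(n + 2) C(n+2, k) = k C(n+1, k-1) + (2k + 1) C(n+1, k) + (n + 1) C(n, k)`, the left-hand
side becomes termwise a telescoping difference, so the sum vanishes.
-/

open Finset Nat

theorem Nat.add_two_mul_choose_add_two (n k : ℕ) :
    (n + 2) * (n + 2).choose k =
      k * (n + 1).choose (k - 1) + (2 * k + 1) * (n + 1).choose k + (n + 1) * n.choose k := by
  cases k with
  | zero => simp only [choose_zero_right]; ring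
  | succ k =>
    have pascal₂ := choose_succ_succ (n + 1) k
    have pascal₁ := choose_succ_succ n k
    have absorb₁ := add_one_mul_choose_eq n k
    have absorb₂ := add_one_mul_choose_eq (n + 1) k
    simp only [add_tsub_cancel_right]
    linear_combination (n + k + 3) * pascal₂ + absorb₂ + (n + 1) * pascal₁ + absorb₁

section HyperSum

variable {K : Type*} [Field K] [CharZero K]

def oddRising (y : K) (k : ℕ) : K := ∏ j ∈ range k, (y + 1 + 2 * (j : K))

def hyperTerm (n : ℕ) (y : K) (k : ℕ) : K := (-1) ^ k / k ! * n.choose k * oddRising y k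

def hyperSum (n : ℕ) (y : K) : K := ∑ k ∈ range (n + 1), hyperTerm n y k

-- The factor `k` makes the truncated `k - 1` harmless at `k = 0`.
def hyperFlux (m : ℕ) (y : K) (k : ℕ) : K := k * ((-1) ^ k / k !) * m.choose (k - 1) * oddRising y k

theorem hyperSum_eq_sum_range {n N : ℕ} (h : n < N) (y : K) :
    hyperSum n y = ∑ k ∈ range N, hyperTerm n y k :=
  sum_subset (range_subset_range.2 h) fun k _ hk => by
    simp [hyperTerm, choose_eq_zero_of_lt (not_lt.1 (mem_range.not.1 hk))]

theorem hyperTerm_recurrence (n : ℕ) (y : K) (k : ℕ) :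
    (n + 2) * hyperTerm (n + 2) y k + y * hyperTerm (n + 1) y k - (n + 1) * hyperTerm n y k =
      hyperFlux (n + 1) y k - hyperFlux (n + 1) y (k + 1) := by
  have hrising : oddRising y (k + 1) = oddRising y k * (y + 1 + 2 * k) := prod_range_succ _ _
  have hcoeff : ((k : K) + 1) * ((-1) ^ (k + 1) / (k + 1) !) = -((-1) ^ k / k !) := by
    rw [factorial_succ]; push_cast
    field_simp
    ring
  have hchoose := congrArg (Nat.cast (R := K)) (Nat.add_two_mul_choose_add_two n k)
  push_cast at hchoose
  simp only [hyperTerm, hyperFlux, add_tsub_cancel_right, hrising]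
  push_cast
  linear_combination (-1) ^ k / k ! * oddRising y k * hchoose
    + (n + 1).choose k * oddRising y k * (y + 1 + 2 * k) * hcoeff

theorem hyperSum_recurrence (n : ℕ) (y : K) :
    (n + 2) * hyperSum (n + 2) y + y * hyperSum (n + 1) y - (n + 1) * hyperSum n y = 0 := by
  rw [hyperSum, hyperSum_eq_sum_range (by omega : n + 1 < n + 3),
    hyperSum_eq_sum_range (by omega : n < n + 3)]
  simp only [mul_sum, ← sum_add_distrib, ← sum_sub_distrib, hyperTerm_recurrence, sum_range_sub']
  simp [hyperFlux]

end HyperSum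

open Complex

noncomputable def closedForm (n : ℕ) (x : ℂ) : ℂ := I ^ n * n ! * hyperSum n (I * x)

theorem closedForm_zero (x : ℂ) : closedForm 0 x = 1 := by
  simp [closedForm, hyperSum, hyperTerm, oddRising]

theorem closedForm_one (x : ℂ) : closedForm 1 x = x := by
  have hsum : hyperSum 1 (I * x) = -(I * x) := by
    simp [hyperSum, hyperTerm, oddRising, sum_range_succ]
  rw [closedForm, hsum, pow_one, factorial_one, cast_one, mul_one, mul_neg, ← mul_assoc, I_mul_I,
    neg_one_mul, neg_neg]

theorem closedForm_add_two (n : ℕ) (x : ℂ) :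
    closedForm (n + 2) x = x * closedForm (n + 1) x - (n + 1) ^ 2 * closedForm n x := by
  have hrec := hyperSum_recurrence n (I * x)
  simp only [closedForm, pow_succ, factorial_succ, cast_mul, cast_add, cast_one]
  linear_combination (-I ^ n * (n + 1) * n !) * hrec
    + (I ^ n * (n + 2) * (n + 1) * n ! * hyperSum (n + 2) (I * x)) * I_sq

open Finset in
theorem stmt_0 (S : ℕ → ℂ → ℂ)
    (h0 : ∀ x, S 0 x = 1) (h1 : ∀ x, S 1 x = x)
    (hrec : ∀ n : ℕ, ∀ x, S (n + 2) x = x * S (n + 1) x - ((n : ℂ) + 1) ^ 2 * S n x) :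
    ∀ n : ℕ, ∀ x : ℂ, S n x = Complex.I ^ n * (n.factorial : ℂ) *
      ∑ k ∈ range (n + 1), ((-1 : ℂ) ^ k / (k.factorial : ℂ)) * (n.choose k : ℂ) *
        ∏ j ∈ range k, (Complex.I * x + 1 + 2 * (j : ℂ)) := by
  have hS : ∀ n, S n = closedForm n := by
    intro n
    induction n using Nat.twoStepInduction with
    | zero => funext x; rw [h0, closedForm_zero]
    | one => funext x; rw [h1, closedForm_one]
    | more n ih₀ ih₁ => funext x; rw [hrec, ih₀, ih₁, closedForm_add_two]
  intro n x
  rw [hS]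
  rfl
end

section
/- For every natural number n, S_n(x) = (−i)^n · Σ_{σ ∈ 𝔖_n} (i x)^{cyco(σ)}, where cyco(σ) is the number of cycles of odd length in the permutation σ. -/
/-!
Put `A_n(u) = ∑_{σ ∈ 𝔖_n} u ^ cyco σ`. It suffices to show
`A_{n+2}(u) = u A_{n+1}(u) + (n+1)² A_n(u)`: then `(-i)ⁿ A_n(ix)` obeys the recurrence of `S_n`.

A permutation of `Fin (n+1)` is a permutation `τ` of `Fin n` together with the new point `0`,
either fixed (one more odd cycle) or inserted into the cycle of some `b`, which toggles the parity
of that cycle. So `A_{n+1} = u A_n + ∑_b ∑_τ u ^ t(τ, b)`, where `t(τ, b)` counts odd cycles after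
toggling the cycle of `b`. Conjugating by a transposition shows that the inner sum does not depend
on `b`, and at `b = 0` it is `(n+1) A_n`: deleting `0` from its cycle also toggles that cycle, so
`t(σ, 0)` is the odd-cycle count of the permutation of `Fin n` underlying `σ`.
-/

open Equiv Finset

namespace Equiv.Perm

variable {α β : Type*} [DecidableEq α]

theorem disjoint_swap_of_apply_eq_self {σ : Perm α} {x a : α} (hx : σ x = x) (ha : σ a = a) :
    Disjoint (swap x a) σ := by
  intro y
  by_cases hy : y = x ∨ y = a
  · rcases hy with rfl | rfl <;> simp [*]
  · rw [not_or] at hy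
    exact Or.inl (swap_apply_of_ne_of_ne hy.1 hy.2)

variable [Fintype α]

-- `partition` records each fixed point as a part `1`, which `cycleType` omits.
def oddCycleCount (σ : Perm α) : ℕ :=
  Multiset.card (σ.partition.parts.filter Odd)

def cycleLength (σ : Perm α) (a : α) : ℕ :=
  #{y | σ.SameCycle a y}

/-- The number of odd cycles once the cycle through `a` changes parity, as it does when a point is
inserted into it or `a` is deleted from it. The subtraction never truncates: that cycle is odd. -/
def toggledOddCycleCount (σ : Perm α) (a : α) : ℕ :=
  if Even (σ.cycleLength a) then σ.oddCycleCount + 1 else σ.oddCycleCount - 1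

theorem oddCycleCount_eq (σ : Perm α) :
    σ.oddCycleCount =
      Multiset.card (σ.cycleType.filter Odd) + (Fintype.card α - σ.cycleType.sum) := by
  have hones (m : ℕ) : (Multiset.replicate m 1).filter Odd = Multiset.replicate m 1 :=
    Multiset.filter_eq_self.mpr fun _ h => Multiset.eq_of_mem_replicate h ▸ odd_one
  rw [oddCycleCount, parts_partition, Multiset.filter_add, Multiset.card_add, hones,
    Multiset.card_replicate, sum_cycleType]

theorem cycleType_sum_le_card (σ : Perm α) : σ.cycleType.sum ≤ Fintype.card α :=
  σ.sum_cycleType ▸ card_le_univ _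

theorem cycleLength_of_apply_eq_self {σ : Perm α} {a : α} (ha : σ a = a) :
    σ.cycleLength a = 1 := by
  rw [cycleLength, card_eq_one]
  exact ⟨a, by ext y; simpa using ⟨fun h => (h.eq_of_left ha).symm, fun h => h ▸ .refl _ _⟩⟩

theorem cycleLength_of_apply_ne {σ : Perm α} {a : α} (ha : σ a ≠ a) :
    σ.cycleLength a = #(σ.cycleOf a).support := by
  rw [cycleLength]
  congr 1
  ext y
  rw [mem_filter, mem_support_cycleOf_iff, mem_support]
  simp [ha]

theorem oddCycleCount_conj (π σ : Perm α) : (π * σ * π⁻¹).oddCycleCount = σ.oddCycleCount := by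
  simp only [oddCycleCount_eq, cycleType_conj]

theorem cycleLength_conj (π σ : Perm α) (a : α) :
    (π * σ * π⁻¹).cycleLength (π a) = σ.cycleLength a := by
  rw [cycleLength, cycleLength, ← card_map π.toEmbedding (s := {y | σ.SameCycle a y})]
  congr 1
  ext y
  rw [mem_filter, mem_map_equiv, mem_filter, sameCycle_conj]
  simp

theorem toggledOddCycleCount_conj (π σ : Perm α) (a : α) :
    (π * σ * π⁻¹).toggledOddCycleCount (π a) = σ.toggledOddCycleCount a := by
  rw [toggledOddCycleCount, toggledOddCycleCount, oddCycleCount_conj, cycleLength_conj]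

section ExtendDomain

variable [DecidableEq β] [Fintype β] {p : β → Prop} [DecidablePred p]

theorem oddCycleCount_extendDomain (σ : Perm α) (f : α ≃ Subtype p) :
    (σ.extendDomain f).oddCycleCount = σ.oddCycleCount + (Fintype.card β - Fintype.card α) := by
  have hcard : Fintype.card α ≤ Fintype.card β :=
    (Fintype.card_congr f).trans_le (Fintype.card_subtype_le p)
  rw [oddCycleCount_eq, oddCycleCount_eq, cycleType_extendDomain]
  have := σ.cycleType_sum_le_card
  omega

theorem cycleLength_extendDomain (σ : Perm α) (f : α ≃ Subtype p) (a : α) :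
    (σ.extendDomain f).cycleLength (f a) = σ.cycleLength a := by
  rw [cycleLength, cycleLength, ← card_map (f.toEmbedding.trans (Function.Embedding.subtype p))]
  congr 1
  ext y
  simp only [mem_filter, mem_univ, true_and, mem_map, Function.Embedding.trans_apply,
    Equiv.coe_toEmbedding, Function.Embedding.subtype_apply]
  constructor
  · intro h
    by_cases hy : p y
    · refine ⟨f.symm ⟨y, hy⟩, ?_, by simp⟩
      rw [← sameCycle_extendDomain (f := f)]
      simpa using h
    · have := h.symm.eq_of_left (extendDomain_apply_not_subtype σ f hy)
      exact absurd (this ▸ (f a).2) hy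
  · rintro ⟨z, hz, rfl⟩
    exact sameCycle_extendDomain.2 hz

end ExtendDomain

theorem cycleType_eq_cycleType_mul_inv_add {c g : Perm α} (hc : c ∈ g.cycleFactorsFinset) :
    g.cycleType = (g * c⁻¹).cycleType + {#c.support} := by
  rw [← (mem_cycleFactorsFinset_iff.1 hc).1.cycleType,
    ← (disjoint_mul_inv_of_mem_cycleFactorsFinset hc).cycleType_mul, inv_mul_cancel_right]

section Merge

variable {σ : Perm α} {x a : α}

theorem isCycle_swap_mul_cycleOf (hx : σ x = x) (ha : σ a ≠ a) :
    IsCycle (swap x a * σ.cycleOf a) ∧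
      (swap x a * σ.cycleOf a).support = insert x (σ.cycleOf a).support := by
  obtain ⟨l, hl⟩ : ∃ l, σ.toList a = a :: l := by
    have hpos := length_toList_pos_of_mem_support σ a (mem_support.2 ha)
    obtain ⟨b, l, hbl⟩ := List.exists_cons_of_length_pos hpos
    have h0 := toList_getElem_zero σ a (mem_support.2 ha)
    simp only [hbl, List.getElem_cons_zero] at h0
    exact ⟨l, h0 ▸ hbl⟩
  have hxl : x ∉ σ.toList a := fun h =>
    ha ((mem_toList_iff.1 h).1.symm.eq_of_left hx ▸ hx)
  have hnd : (x :: σ.toList a).Nodup := List.nodup_cons.2 ⟨hxl, nodup_toList σ a⟩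
  have hform : List.formPerm (x :: σ.toList a) = swap x a * σ.cycleOf a := by
    rw [hl, List.formPerm_cons_cons, ← hl, formPerm_toList]
  rw [← hform, List.support_formPerm_of_nodup _ hnd (by simp [hl]), ← formPerm_toList,
    List.support_formPerm_of_nodup _ (nodup_toList σ a) (toList_ne_singleton σ a),
    List.toFinset_cons]
  exact ⟨List.isCycle_formPerm hnd (by simp [hl]), rfl⟩

theorem swap_mul_cycleOf_mem_cycleFactorsFinset (hx : σ x = x) (ha : σ a ≠ a) :
    swap x a * σ.cycleOf a ∈ (swap x a * σ).cycleFactorsFinset := by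
  obtain ⟨hcycle, hsupp⟩ := isCycle_swap_mul_cycleOf hx ha
  refine mem_cycleFactorsFinset_iff.2 ⟨hcycle, fun y hy => ?_⟩
  rw [hsupp, mem_insert] at hy
  rcases hy with rfl | hy
  · simp [cycleOf_apply, hx]
  · simp [((mem_support_cycleOf_iff.1 hy).1).cycleOf_apply]

theorem card_support_swap_mul_cycleOf (hx : σ x = x) (ha : σ a ≠ a) :
    #(swap x a * σ.cycleOf a).support = σ.cycleLength a + 1 := by
  have hxc : x ∉ (σ.cycleOf a).support := by simp [cycleOf_apply, hx]
  rw [(isCycle_swap_mul_cycleOf hx ha).2, card_insert_of_notMem hxc, cycleLength_of_apply_ne ha]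

theorem cycleType_swap_mul_add_of_apply_ne (hx : σ x = x) (ha : σ a ≠ a) :
    (swap x a * σ).cycleType + {σ.cycleLength a} = σ.cycleType + {σ.cycleLength a + 1} := by
  -- removing the merged cycle leaves the conjugate of `σ` without the cycle of `a`
  have hconj : swap x a * σ * (swap x a * σ.cycleOf a)⁻¹ =
      swap x a * (σ * (σ.cycleOf a)⁻¹) * (swap x a)⁻¹ := by group
  rw [cycleType_eq_cycleType_mul_inv_add (swap_mul_cycleOf_mem_cycleFactorsFinset hx ha),
    cycleType_eq_cycleType_mul_inv_add (cycleOf_mem_cycleFactorsFinset_iff.2 (mem_support.2 ha)),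
    hconj, cycleType_conj, card_support_swap_mul_cycleOf hx ha, cycleLength_of_apply_ne ha,
    add_assoc, add_assoc, add_comm {_}]

theorem cycleType_swap_mul_of_apply_eq_self (hx : σ x = x) (hxa : x ≠ a) (ha : σ a = a) :
    (swap x a * σ).cycleType = σ.cycleType + {2} := by
  rw [(disjoint_swap_of_apply_eq_self hx ha).cycleType_mul, (isCycle_swap hxa).cycleType,
    card_support_swap hxa, add_comm]

theorem cycleLength_swap_mul_self (hx : σ x = x) (hxa : x ≠ a) :
    (swap x a * σ).cycleLength x = σ.cycleLength a + 1 := by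
  have hfx : (swap x a * σ) x ≠ x := by simpa [hx] using hxa.symm
  rw [cycleLength_of_apply_ne hfx]
  by_cases ha : σ a = a
  · rw [cycleOf_mul_of_apply_right_eq_self (disjoint_swap_of_apply_eq_self hx ha).commute x hx,
      (isCycle_swap hxa).cycleOf_eq (by simpa using hxa.symm), card_support_swap hxa,
      cycleLength_of_apply_eq_self ha]
  · have hmem : x ∈ (swap x a * σ.cycleOf a).support := by
      simp [(isCycle_swap_mul_cycleOf hx ha).2]
    rw [← cycle_is_cycleOf hmem (swap_mul_cycleOf_mem_cycleFactorsFinset hx ha),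
      card_support_swap_mul_cycleOf hx ha]

theorem oddCycleCount_swap_mul (hx : σ x = x) (hxa : x ≠ a) :
    (swap x a * σ).oddCycleCount + (if Odd (σ.cycleLength a) then 2 else 0) =
      σ.oddCycleCount := by
  have hle := (swap x a * σ).cycleType_sum_le_card
  rw [oddCycleCount_eq, oddCycleCount_eq]
  by_cases ha : σ a = a
  · rw [cycleType_swap_mul_of_apply_eq_self hx hxa ha] at hle ⊢
    simp only [Multiset.sum_add, Multiset.sum_singleton, Multiset.filter_add,
      Multiset.filter_singleton, cycleLength_of_apply_eq_self ha, if_neg (by decide : ¬Odd 2),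
      if_pos odd_one, Multiset.empty_eq_zero, add_zero] at hle ⊢
    omega
  · have h := cycleType_swap_mul_add_of_apply_ne hx ha
    have hsum := congrArg Multiset.sum h
    have hodd := congrArg (fun s => Multiset.card (s.filter Odd)) h
    simp only [Multiset.sum_add, Multiset.sum_singleton, Multiset.filter_add,
      Multiset.card_add, Multiset.filter_singleton, Nat.odd_add_one] at hsum hodd
    split_ifs at hodd ⊢ <;>
      simp only [Multiset.card_singleton, Multiset.empty_eq_zero, Multiset.card_zero] at hodd <;>
      omega

end Merge

section Fin

variable {n : ℕ}

theorem decomposeFin_symm_zero_eq_extendDomain (τ : Perm (Fin n)) :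
    decomposeFin.symm (0, τ) = τ.extendDomain (finSuccAboveEquiv 0) := by
  ext i
  refine Fin.cases ?_ (fun b => ?_) i
  · rw [decomposeFin_symm_apply_zero, extendDomain_apply_not_subtype _ _ (by simp)]
  · have hb : b.succ = (finSuccAboveEquiv 0 b : Fin (n + 1)) := by simp [finSuccAboveEquiv_apply]
    rw [decomposeFin_symm_apply_succ, hb, extendDomain_apply_image]
    simp [finSuccAboveEquiv_apply]

theorem decomposeFin_symm_eq_swap_mul (p : Fin (n + 1)) (τ : Perm (Fin n)) :
    decomposeFin.symm (p, τ) = swap 0 p * decomposeFin.symm (0, τ) := by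
  ext i
  refine Fin.cases ?_ (fun b => ?_) i <;> simp

theorem oddCycleCount_decomposeFin_symm_zero (τ : Perm (Fin n)) :
    (decomposeFin.symm (0, τ)).oddCycleCount = τ.oddCycleCount + 1 := by
  rw [decomposeFin_symm_zero_eq_extendDomain, oddCycleCount_extendDomain]
  simp

theorem cycleLength_decomposeFin_symm_zero_succ (τ : Perm (Fin n)) (b : Fin n) :
    (decomposeFin.symm (0, τ)).cycleLength b.succ = τ.cycleLength b := by
  have hb : b.succ = (finSuccAboveEquiv 0 b : Fin (n + 1)) := by simp [finSuccAboveEquiv_apply]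
  rw [decomposeFin_symm_zero_eq_extendDomain, hb, cycleLength_extendDomain]

theorem oddCycleCount_decomposeFin_symm_succ_add (τ : Perm (Fin n)) (b : Fin n) :
    (decomposeFin.symm (b.succ, τ)).oddCycleCount + (if Odd (τ.cycleLength b) then 2 else 0) =
      τ.oddCycleCount + 1 := by
  rw [decomposeFin_symm_eq_swap_mul, ← cycleLength_decomposeFin_symm_zero_succ,
    ← oddCycleCount_decomposeFin_symm_zero]
  exact oddCycleCount_swap_mul (by simp) (Fin.succ_ne_zero b).symm

theorem oddCycleCount_decomposeFin_symm_succ (τ : Perm (Fin n)) (b : Fin n) :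
    (decomposeFin.symm (b.succ, τ)).oddCycleCount = τ.toggledOddCycleCount b := by
  have h := oddCycleCount_decomposeFin_symm_succ_add τ b
  simp only [toggledOddCycleCount, ← Nat.not_odd_iff_even]
  split_ifs at h ⊢ <;> omega

theorem toggledOddCycleCount_decomposeFin_symm_zero (p : Fin (n + 1)) (τ : Perm (Fin n)) :
    (decomposeFin.symm (p, τ)).toggledOddCycleCount 0 = τ.oddCycleCount := by
  rw [toggledOddCycleCount]
  cases p using Fin.cases with
  | zero =>
    rw [cycleLength_of_apply_eq_self (by simp), oddCycleCount_decomposeFin_symm_zero]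
    simp
  | succ b =>
    have h := oddCycleCount_decomposeFin_symm_succ_add τ b
    have hlen : (decomposeFin.symm (b.succ, τ)).cycleLength 0 = τ.cycleLength b + 1 := by
      rw [decomposeFin_symm_eq_swap_mul, cycleLength_swap_mul_self (by simp)
        (Fin.succ_ne_zero b).symm, cycleLength_decomposeFin_symm_zero_succ]
    simp only [hlen, Nat.even_add_one, Nat.not_even_iff_odd]
    split_ifs at h ⊢ <;> omega

end Fin

section Sum

variable {R : Type*} [CommSemiring R]

def oddCycleSum (α : Type*) [DecidableEq α] [Fintype α] (u : R) : R :=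
  ∑ σ : Perm α, u ^ σ.oddCycleCount

theorem sum_perm_fin_succ {M : Type*} [AddCommMonoid M] {n : ℕ} (g : Perm (Fin (n + 1)) → M) :
    ∑ σ, g σ = ∑ p, ∑ τ, g (decomposeFin.symm (p, τ)) := by
  rw [← Fintype.sum_prod_type']
  exact Fintype.sum_equiv decomposeFin _ _ (by simp)

theorem sum_pow_toggledOddCycleCount_eq (u : R) (a b : α) :
    ∑ σ : Perm α, u ^ σ.toggledOddCycleCount a = ∑ σ : Perm α, u ^ σ.toggledOddCycleCount b := by
  refine Fintype.sum_equiv (MulAut.conj (swap a b)).toEquiv _ _ fun σ => ?_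
  have h := toggledOddCycleCount_conj (swap a b) σ a
  rw [swap_apply_left] at h
  simp only [MulEquiv.toEquiv_eq_coe, MulEquiv.coe_toEquiv, MulAut.conj_apply, h]

theorem oddCycleSum_fin_succ (u : R) (n : ℕ) :
    oddCycleSum (Fin (n + 1)) u =
      u * oddCycleSum (Fin n) u +
        ∑ b : Fin n, ∑ τ : Perm (Fin n), u ^ τ.toggledOddCycleCount b := by
  rw [oddCycleSum, sum_perm_fin_succ, Fin.sum_univ_succ, oddCycleSum, mul_sum]
  simp only [oddCycleCount_decomposeFin_symm_zero, oddCycleCount_decomposeFin_symm_succ, pow_succ,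
    mul_comm u]

theorem sum_pow_toggledOddCycleCount_fin_zero (u : R) (n : ℕ) :
    ∑ σ : Perm (Fin (n + 1)), u ^ σ.toggledOddCycleCount 0 = (n + 1) * oddCycleSum (Fin n) u := by
  rw [sum_perm_fin_succ]
  simp [toggledOddCycleCount_decomposeFin_symm_zero, oddCycleSum]

theorem oddCycleSum_fin_add_two (u : R) (n : ℕ) :
    oddCycleSum (Fin (n + 2)) u =
      u * oddCycleSum (Fin (n + 1)) u + (n + 1) ^ 2 * oddCycleSum (Fin n) u := by
  rw [oddCycleSum_fin_succ u (n + 1)]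
  simp only [sum_pow_toggledOddCycleCount_eq u _ (0 : Fin (n + 1)),
    sum_pow_toggledOddCycleCount_fin_zero, sum_const, card_univ, Fintype.card_fin, nsmul_eq_mul]
  push_cast
  ring

theorem oddCycleSum_fin_zero (u : R) : oddCycleSum (Fin 0) u = 1 := by
  simp [oddCycleSum, oddCycleCount_eq]

theorem oddCycleSum_fin_one (u : R) : oddCycleSum (Fin 1) u = u := by
  simp [oddCycleSum, oddCycleCount_eq]

end Sum

end Equiv.Perm

open Equiv.Perm

open Finset in
theorem stmt_2 (S : ℕ → ℂ → ℂ)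
    (h0 : ∀ x, S 0 x = 1) (h1 : ∀ x, S 1 x = x)
    (hrec : ∀ n : ℕ, ∀ x, S (n + 2) x = x * S (n + 1) x - ((n : ℂ) + 1) ^ 2 * S n x)
    (cyco : ∀ n : ℕ, Equiv.Perm (Fin n) → ℕ)
    (hcyco : ∀ n : ℕ, ∀ σ : Equiv.Perm (Fin n),
      cyco n σ = Multiset.card (σ.cycleType.filter (fun m => Odd m)) + (n - σ.cycleType.sum)) :
    ∀ n : ℕ, ∀ x : ℂ, S n x = (-Complex.I) ^ n *
      ∑ σ : Equiv.Perm (Fin n), (Complex.I * x) ^ (cyco n σ) := by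
  intro n x
  have hsum (m : ℕ) : ∑ σ : Perm (Fin m), (Complex.I * x) ^ cyco m σ =
      oddCycleSum (Fin m) (Complex.I * x) :=
    Fintype.sum_congr _ _ fun σ => by rw [hcyco, oddCycleCount_eq, Fintype.card_fin]
  rw [hsum]
  induction n using Nat.twoStepInduction with
  | zero => simp [h0, oddCycleSum_fin_zero]
  | one =>
    rw [h1, oddCycleSum_fin_one, ← mul_assoc, pow_one, neg_mul, Complex.I_mul_I]
    ring
  | more n ih0 ih1 =>
    rw [hrec, ih0, ih1, oddCycleSum_fin_add_two]
    linear_combination (-(-Complex.I) ^ n * (Complex.I * x * oddCycleSum (Fin (n + 1))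
      (Complex.I * x) + ((n : ℂ) + 1) ^ 2 * oddCycleSum (Fin n) (Complex.I * x))) *
      Complex.I_mul_I
end

section
/- For all natural numbers n and k ≤ n, the sum over all Ferrers boards B contained in the n×n square of the k-th rook number r_k(B) equals (2n)! / (2^k · k! · (n−k)! · (n−k)!). -/
/-!
Generalise from the square to an `a × b` rectangle and let `S(a, b, k)` be the sum of `r_k(B)` over
the Ferrers boards `B` in it. Either the last column of `B` is empty, and `B` is a board in
`(a - 1) × b`; or every column is nonempty, and `B` is a full bottom row of length `a` below a
board `B'` in `a × (b - 1)`. In the second case `r_k(B) = r_k(B') + (a - k + 1) r_{k-1}(B')`,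
according to whether the bottom row carries a rook (it can go to any of the `a - (k - 1)` columns
left free by the other rooks). Hence
`S(a, b, k) = S(a - 1, b, k) + S(a, b - 1, k) + (a - k + 1) S(a, b - 1, k - 1)`,
and `(a + b)! / (2^k k! (a - k)! (b - k)!)` satisfies the same recursion and initial values.
-/

open Finset
open scoped Nat

section RookPlacements

variable {α β : Type*}

open Classical in
noncomputable def rookPlacements (B : Finset (α × β)) (k : ℕ) : Finset (Finset (α × β)) :=
  (B.powersetCard k).filter fun P =>
    Set.InjOn Prod.fst (P : Set (α × β)) ∧ Set.InjOn Prod.snd (P : Set (α × β))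

theorem mem_rookPlacements {B P : Finset (α × β)} {k : ℕ} :
    P ∈ rookPlacements B k ↔
      P ⊆ B ∧ #P = k ∧
        Set.InjOn Prod.fst (P : Set (α × β)) ∧ Set.InjOn Prod.snd (P : Set (α × β)) := by
  simp [rookPlacements, mem_powersetCard, and_assoc]

theorem injOn_fst_and_injOn_snd_iff {P : Finset (α × β)} :
    Set.InjOn Prod.fst (P : Set (α × β)) ∧ Set.InjOn Prod.snd (P : Set (α × β)) ↔
      ∀ c ∈ P, ∀ c' ∈ P, c ≠ c' → c.1 ≠ c'.1 ∧ c.2 ≠ c'.2 := by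
  constructor
  · rintro ⟨h₁, h₂⟩ c hc c' hc' hne
    exact ⟨fun h => hne (h₁ hc hc' h), fun h => hne (h₂ hc hc' h)⟩
  · intro h
    exact ⟨fun c hc c' hc' heq => by_contra fun hne => (h c hc c' hc' hne).1 heq,
      fun c hc c' hc' heq => by_contra fun hne => (h c hc c' hc' hne).2 heq⟩

theorem rookPlacements_zero (B : Finset (α × β)) : rookPlacements B 0 = {∅} := by
  ext P
  rw [mem_rookPlacements, mem_singleton, card_eq_zero]
  constructor
  · exact fun h => h.2.1
  · rintro rfl
    simp

theorem rookPlacements_eq_empty_of_card_lt_left [Fintype α] (B : Finset (α × β)) {k : ℕ}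
    (hk : Fintype.card α < k) : rookPlacements B k = ∅ := by
  refine eq_empty_of_forall_notMem fun P hP => ?_
  obtain ⟨-, rfl, hinj, -⟩ := mem_rookPlacements.mp hP
  exact hk.not_ge (card_le_card_of_injOn Prod.fst (fun _ _ => mem_coe.2 (mem_univ _)) hinj)

theorem rookPlacements_eq_empty_of_card_lt_right [Fintype β] (B : Finset (α × β)) {k : ℕ}
    (hk : Fintype.card β < k) : rookPlacements B k = ∅ := by
  refine eq_empty_of_forall_notMem fun P hP => ?_
  obtain ⟨-, rfl, -, hinj⟩ := mem_rookPlacements.mp hP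
  exact hk.not_ge (card_le_card_of_injOn Prod.snd (fun _ _ => mem_coe.2 (mem_univ _)) hinj)

theorem card_rookPlacements_map {α' β' : Type*}
    (e₁ : α ↪ α') (e₂ : β ↪ β') (B : Finset (α × β)) (k : ℕ) :
    #(rookPlacements (B.map (e₁.prodMap e₂)) k) = #(rookPlacements B k) := by
  classical
  rw [rookPlacements, powersetCard_map, filter_map, card_map, rookPlacements]
  congr 1
  refine filter_congr fun P _ => ?_
  simp only [Function.comp_apply, RelEmbedding.coe_toEmbedding, mapEmbedding_apply, coe_map,
    Set.InjOn, Set.forall_mem_image, Function.Embedding.coe_prodMap, Prod.map_fst, Prod.map_snd,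
    EmbeddingLike.apply_eq_iff_eq, (e₁.injective.prodMap e₂.injective).eq_iff]

section FullRow

variable [DecidableEq α] [DecidableEq β] {B : Finset (α × β)} {C : Finset α} {r : β}

theorem card_filter_exists_row_rookPlacements_union (hBr : ∀ c ∈ B, c.2 ≠ r) (k : ℕ) :
    #((rookPlacements (B ∪ C ×ˢ {r}) (k + 1)).filter fun P => ∃ c ∈ P, c.2 = r) =
      ∑ Q ∈ rookPlacements B k, #(C \ Q.image Prod.fst) := by
  have row_notMem {Q : Finset (α × β)} (hQ : Q ∈ rookPlacements B k) (c : α) : (c, r) ∉ Q :=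
    fun h => hBr _ ((mem_rookPlacements.1 hQ).1 h) rfl
  rw [← card_sigma]
  refine (card_bij (fun s _ => insert (s.2, r) s.1) ?_ ?_ ?_).symm
  · rintro ⟨Q, c⟩ hQc
    obtain ⟨hQ, hc⟩ := mem_sigma.1 hQc
    obtain ⟨hQB, hQk, hfst, hsnd⟩ := mem_rookPlacements.1 hQ
    obtain ⟨hcC, hcQ⟩ := mem_sdiff.1 hc
    refine mem_filter.2 ⟨mem_rookPlacements.2 ⟨?_, ?_, ?_, ?_⟩, _, mem_insert_self _ _, rfl⟩
    · exact insert_subset (mem_union_right _ (mem_product.2 ⟨hcC, mem_singleton_self r⟩))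
        (hQB.trans subset_union_left)
    · rw [card_insert_of_notMem (row_notMem hQ c), hQk]
    · rw [coe_insert, Set.injOn_insert (row_notMem hQ c)]
      exact ⟨hfst, by simpa using hcQ⟩
    · rw [coe_insert, Set.injOn_insert (row_notMem hQ c)]
      exact ⟨hsnd, fun ⟨x, hx, hxr⟩ => hBr x (hQB hx) hxr⟩
  · rintro ⟨Q, c⟩ hQc ⟨Q', c'⟩ hQc' h
    have hQ : Q ∈ rookPlacements B k := (mem_sigma.1 hQc).1
    have hQ' : Q' ∈ rookPlacements B k := (mem_sigma.1 hQc').1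
    have hcc' : c = c' := by
      have hmem : (c, r) ∈ insert (c', r) Q' := h ▸ mem_insert_self _ _
      rcases mem_insert.1 hmem with h' | h'
      · exact congrArg Prod.fst h'
      · exact absurd h' (row_notMem hQ' c)
    subst hcc'
    have hQQ' : Q = Q' := by
      rw [← erase_insert (row_notMem hQ c), ← erase_insert (row_notMem hQ' c)]
      exact congrArg (·.erase (c, r)) h
    rw [hQQ']
  · intro P hP
    obtain ⟨hPR, ⟨c, r'⟩, hcP, hr' : r' = r⟩ := mem_filter.1 hP
    rw [hr'] at hcP
    obtain ⟨hPB, hPk, hfst, hsnd⟩ := mem_rookPlacements.1 hPR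
    have hQ : P.erase (c, r) ∈ rookPlacements B k := by
      refine mem_rookPlacements.2 ⟨fun x hx => ?_, ?_, hfst.mono (erase_subset _ _),
        hsnd.mono (erase_subset _ _)⟩
      · obtain ⟨hxc, hxP⟩ := mem_erase.1 hx
        refine (mem_union.1 (hPB hxP)).resolve_right fun hx' => hxc ?_
        exact hsnd hxP hcP (mem_singleton.1 (mem_product.1 hx').2)
      · rw [card_erase_of_mem hcP, hPk, Nat.add_sub_cancel]
    refine ⟨⟨P.erase (c, r), c⟩, mem_sigma.2 ⟨hQ, mem_sdiff.2 ⟨?_, ?_⟩⟩, ?_⟩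
    · exact (mem_product.1 ((mem_union.1 (hPB hcP)).resolve_left fun h => hBr _ h rfl)).1
    · intro h
      obtain ⟨x, hx, hxc⟩ := mem_image.1 h
      obtain ⟨hne, hxP⟩ := mem_erase.1 hx
      exact hne (hfst hxP hcP hxc)
    · exact insert_erase hcP

theorem filter_not_exists_row_rookPlacements_union (hBr : ∀ c ∈ B, c.2 ≠ r) (k : ℕ) :
    ((rookPlacements (B ∪ C ×ˢ {r}) k).filter fun P => ¬∃ c ∈ P, c.2 = r) =
      rookPlacements B k := by
  ext P
  simp only [mem_filter, mem_rookPlacements, not_exists, not_and]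
  constructor
  · rintro ⟨⟨hPBC, hPk, hfst, hsnd⟩, hPr⟩
    refine ⟨fun x hx => (mem_union.1 (hPBC hx)).resolve_right fun hx' => ?_, hPk, hfst, hsnd⟩
    exact hPr x hx (mem_singleton.1 (mem_product.1 hx').2)
  · rintro ⟨hPB, hPk, hfst, hsnd⟩
    exact ⟨⟨hPB.trans subset_union_left, hPk, hfst, hsnd⟩, fun x hx => hBr x (hPB hx)⟩

theorem card_rookPlacements_union_row (hBr : ∀ c ∈ B, c.2 ≠ r) (hBC : ∀ c ∈ B, c.1 ∈ C)
    (k : ℕ) :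
    #(rookPlacements (B ∪ C ×ˢ {r}) (k + 1)) =
      #(rookPlacements B (k + 1)) + (#C - k) * #(rookPlacements B k) := by
  have free_columns (Q) (hQ : Q ∈ rookPlacements B k) : #(C \ Q.image Prod.fst) = #C - k := by
    obtain ⟨hQB, hQk, hfst, -⟩ := mem_rookPlacements.1 hQ
    rw [card_sdiff_of_subset (image_subset_iff.2 fun x hx => hBC x (hQB hx)),
      card_image_of_injOn hfst, hQk]
  rw [← card_filter_add_card_filter_not (p := fun P => ∃ c ∈ P, c.2 = r), add_comm,
    filter_not_exists_row_rookPlacements_union hBr, card_filter_exists_row_rookPlacements_union hBr,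
    sum_congr rfl free_columns, sum_const, smul_eq_mul, mul_comm]

end FullRow

end RookPlacements

theorem Antitone.fin_snoc {γ : Type*} [Preorder γ] {n : ℕ} {f : Fin n → γ} {x : γ}
    (hf : Antitone f) (hx : ∀ i, x ≤ f i) : Antitone (Fin.snoc f x : Fin (n + 1) → γ) := by
  intro i j hij
  cases j using Fin.lastCases with
  | last => cases i using Fin.lastCases <;> simp [hx]
  | cast j =>
    cases i using Fin.lastCases with
    | last => exact absurd hij (Fin.castSucc_lt_last j).not_ge
    | cast i => simpa using hf (Fin.castSucc_le_castSucc_iff.1 hij)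

section Ferrers

variable {a b : ℕ}

def ferrersBoards (a b : ℕ) : Finset (Fin a → Fin (b + 1)) :=
  univ.filter fun lam => ∀ i j : Fin a, i ≤ j → lam j ≤ lam i

def ferrersBoard (lam : Fin a → Fin (b + 1)) : Finset (Fin a × Fin b) :=
  univ.filter fun c => (c.2 : ℕ) < (lam c.1 : ℕ)

noncomputable def ferrersRookSum (a b k : ℕ) : ℕ :=
  ∑ lam ∈ ferrersBoards a b, #(rookPlacements (ferrersBoard lam) k)

theorem mem_ferrersBoards {lam : Fin a → Fin (b + 1)} :
    lam ∈ ferrersBoards a b ↔ Antitone lam := by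
  simp [ferrersBoards, Antitone]

theorem ferrersBoard_snoc_zero (lam : Fin a → Fin (b + 1)) :
    ferrersBoard (Fin.snoc lam 0 : Fin (a + 1) → Fin (b + 1)) =
      (ferrersBoard lam).map (Fin.castSuccEmb.prodMap (Function.Embedding.refl _)) := by
  ext ⟨i, j⟩
  cases i using Fin.lastCases <;> simp [ferrersBoard]

theorem ferrersBoard_succ_comp (lam : Fin a → Fin (b + 1)) :
    ferrersBoard (Fin.succ ∘ lam) =
      (ferrersBoard lam).map ((Function.Embedding.refl _).prodMap (Fin.succEmb b)) ∪
        univ ×ˢ {0} := by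
  ext ⟨i, j⟩
  cases j using Fin.cases with
  | zero => simp [ferrersBoard]
  | succ j =>
    have hcell : (i, j.succ) = (Function.Embedding.refl _).prodMap (Fin.succEmb b) (i, j) := rfl
    simp only [ferrersBoard, mem_union, mem_filter, mem_univ, true_and, Function.comp_apply,
      Fin.val_succ, mem_product, mem_singleton, Fin.succ_ne_zero, and_false, or_false]
    rw [hcell, mem_map', mem_filter]
    simp

theorem sum_filter_last_eq_zero_ferrersBoards {M : Type*} [AddCommMonoid M]
    (f : (Fin (a + 1) → Fin (b + 1)) → M) :
    ∑ lam ∈ (ferrersBoards (a + 1) b).filter (fun lam => lam (Fin.last a) = 0), f lam =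
      ∑ lam ∈ ferrersBoards a b, f (Fin.snoc lam 0) := by
  have snoc_init {lam : Fin (a + 1) → Fin (b + 1)} (hlast : lam (Fin.last a) = 0) :
      Fin.snoc (Fin.init lam) 0 = lam := by
    rw [← hlast]
    exact Fin.snoc_init_self lam
  refine sum_nbij' Fin.init (Fin.snoc · 0) (fun lam hlam => ?_) (fun lam hlam => ?_)
    (fun lam hlam => snoc_init (mem_filter.1 hlam).2) (fun lam _ => Fin.init_snoc _ _)
    (fun lam hlam => by rw [snoc_init (mem_filter.1 hlam).2])
  · rw [mem_filter, mem_ferrersBoards] at hlam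
    exact mem_ferrersBoards.2 (hlam.1.comp_monotone Fin.strictMono_castSucc.monotone)
  · rw [mem_ferrersBoards] at hlam
    exact mem_filter.2 ⟨mem_ferrersBoards.2 (hlam.fin_snoc fun _ => Fin.zero_le _),
      Fin.snoc_last _ _⟩

theorem sum_filter_last_ne_zero_ferrersBoards {M : Type*} [AddCommMonoid M]
    (f : (Fin (a + 1) → Fin (b + 2)) → M) :
    ∑ lam ∈ (ferrersBoards (a + 1) (b + 1)).filter (fun lam => ¬lam (Fin.last a) = 0), f lam =
      ∑ lam ∈ ferrersBoards (a + 1) b, f (Fin.succ ∘ lam) := by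
  have succ_pred {lam : Fin (a + 1) → Fin (b + 2)}
      (hlam : lam ∈ (ferrersBoards (a + 1) (b + 1)).filter fun lam => ¬lam (Fin.last a) = 0) :
      Fin.succ ∘ Fin.predAbove 0 ∘ lam = lam := by
    rw [mem_filter, mem_ferrersBoards] at hlam
    funext i
    refine Fin.succ_predAbove_zero fun h => hlam.2 (Fin.le_zero_iff.1 ?_)
    exact h ▸ hlam.1 (Fin.le_last i)
  refine sum_nbij' (Fin.predAbove 0 ∘ ·) (Fin.succ ∘ ·) (fun lam hlam => ?_)
    (fun lam hlam => ?_) (fun lam hlam => succ_pred hlam)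
    (fun lam _ => funext fun i => Fin.predAbove_zero_succ)
    (fun lam hlam => by rw [succ_pred hlam])
  · rw [mem_filter, mem_ferrersBoards] at hlam
    exact mem_ferrersBoards.2 ((Fin.predAbove_right_monotone 0).comp_antitone hlam.1)
  · rw [mem_ferrersBoards] at hlam
    exact mem_filter.2 ⟨mem_ferrersBoards.2 (Fin.strictMono_succ.monotone.comp_antitone hlam),
      Fin.succ_ne_zero _⟩

theorem sum_ferrersBoards_succ_succ {M : Type*} [AddCommMonoid M]
    (f : (Fin (a + 1) → Fin (b + 2)) → M) :
    ∑ lam ∈ ferrersBoards (a + 1) (b + 1), f lam =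
      ∑ lam ∈ ferrersBoards a (b + 1), f (Fin.snoc lam 0) +
        ∑ lam ∈ ferrersBoards (a + 1) b, f (Fin.succ ∘ lam) := by
  rw [← sum_filter_add_sum_filter_not _ fun lam => lam (Fin.last a) = 0,
    sum_filter_last_eq_zero_ferrersBoards, sum_filter_last_ne_zero_ferrersBoards]

theorem card_ferrersBoards (a b : ℕ) : #(ferrersBoards a b) = (a + b).choose b := by
  induction a generalizing b with
  | zero => simp [ferrersBoards]
  | succ a iha =>
    induction b with
    | zero => simp [ferrersBoards]
    | succ b ihb =>
      rw [card_eq_sum_ones, sum_ferrersBoards_succ_succ, ← card_eq_sum_ones, ← card_eq_sum_ones,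
        iha, ihb, show a + 1 + (b + 1) = a + b + 1 + 1 by ring, Nat.choose_succ_succ,
        show a + (b + 1) = a + b + 1 by ring, show a + 1 + b = a + b + 1 by ring, add_comm]

theorem card_rookPlacements_ferrersBoard_snoc_zero (lam : Fin a → Fin (b + 1)) (k : ℕ) :
    #(rookPlacements (ferrersBoard (Fin.snoc lam 0 : Fin (a + 1) → Fin (b + 1))) k) =
      #(rookPlacements (ferrersBoard lam) k) := by
  rw [ferrersBoard_snoc_zero, card_rookPlacements_map]

theorem card_rookPlacements_ferrersBoard_succ_comp (lam : Fin a → Fin (b + 1)) (k : ℕ) :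
    #(rookPlacements (ferrersBoard (Fin.succ ∘ lam)) (k + 1)) =
      #(rookPlacements (ferrersBoard lam) (k + 1)) +
        (a - k) * #(rookPlacements (ferrersBoard lam) k) := by
  rw [ferrersBoard_succ_comp, card_rookPlacements_union_row, card_rookPlacements_map,
    card_rookPlacements_map, card_univ, Fintype.card_fin]
  · intro c hc
    obtain ⟨c, -, rfl⟩ := mem_map.1 hc
    exact Fin.succ_ne_zero _
  · exact fun c _ => mem_univ c.1

theorem ferrersRookSum_zero (a b : ℕ) : ferrersRookSum a b 0 = #(ferrersBoards a b) := by
  simp [ferrersRookSum, rookPlacements_zero]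

theorem ferrersRookSum_eq_zero_of_lt_left {k : ℕ} (hk : a < k) : ferrersRookSum a b k = 0 :=
  sum_eq_zero fun lam _ => by
    rw [rookPlacements_eq_empty_of_card_lt_left _ (by simpa using hk), card_empty]

theorem ferrersRookSum_eq_zero_of_lt_right {k : ℕ} (hk : b < k) : ferrersRookSum a b k = 0 :=
  sum_eq_zero fun lam _ => by
    rw [rookPlacements_eq_empty_of_card_lt_right _ (by simpa using hk), card_empty]

theorem ferrersRookSum_succ_succ_succ (a b k : ℕ) :
    ferrersRookSum (a + 1) (b + 1) (k + 1) =
      ferrersRookSum a (b + 1) (k + 1) + ferrersRookSum (a + 1) b (k + 1) +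
        (a + 1 - k) * ferrersRookSum (a + 1) b k := by
  simp only [ferrersRookSum, sum_ferrersBoards_succ_succ,
    card_rookPlacements_ferrersBoard_snoc_zero, card_rookPlacements_ferrersBoard_succ_comp,
    sum_add_distrib, mul_sum, add_assoc]

end Ferrers

-- Stated for `a = p + k`, `b = q + k` so that no truncated subtraction occurs.
theorem ferrersRookSum_add_add_mul (p q k : ℕ) :
    ferrersRookSum (p + k) (q + k) k * (2 ^ k * k ! * p ! * q !) = (p + q + 2 * k)! := by
  induction hn : p + q + 2 * k using Nat.strong_induction_on generalizing p q k with
  | _ n ih =>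
  subst hn
  rcases k with _ | j
  · simp only [add_zero, ferrersRookSum_zero, card_ferrersBoards, pow_zero,
      Nat.factorial_zero, one_mul, mul_zero]
    rw [← mul_assoc, Nat.add_choose_mul_factorial_mul_factorial]
  have last_column_empty :
      ferrersRookSum (p + j) (q + j + 1) (j + 1) * (2 ^ (j + 1) * (j + 1)! * p ! * q !) =
        p * (p + q + 2 * j + 1)! := by
    rcases p with _ | p
    · simp [ferrersRookSum_eq_zero_of_lt_left]
    · have h := ih _ (by omega) p q (j + 1) rfl
      rw [show p + q + 2 * (j + 1) = p + 1 + q + 2 * j + 1 by ring,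
        show p + (j + 1) = p + 1 + j by ring, show q + (j + 1) = q + j + 1 by ring] at h
      rw [← h, Nat.factorial_succ p]
      ring
  have bottom_row_free :
      ferrersRookSum (p + j + 1) (q + j) (j + 1) * (2 ^ (j + 1) * (j + 1)! * p ! * q !) =
        q * (p + q + 2 * j + 1)! := by
    rcases q with _ | q
    · simp [ferrersRookSum_eq_zero_of_lt_right]
    · have h := ih _ (by omega) p q (j + 1) rfl
      rw [show p + q + 2 * (j + 1) = p + (q + 1) + 2 * j + 1 by ring,
        show p + (j + 1) = p + j + 1 by ring, show q + (j + 1) = q + 1 + j by ring] at h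
      rw [← h, Nat.factorial_succ q]
      ring
  have bottom_row_taken :
      (p + 1) * ferrersRookSum (p + j + 1) (q + j) j * (2 ^ (j + 1) * (j + 1)! * p ! * q !) =
        2 * (j + 1) * (p + q + 2 * j + 1)! := by
    have h := ih _ (by omega) (p + 1) q j rfl
    rw [show p + 1 + q + 2 * j = p + q + 2 * j + 1 by ring, show p + 1 + j = p + j + 1 by ring] at h
    rw [← h, Nat.factorial_succ j, Nat.factorial_succ p]
    ring
  rw [show p + (j + 1) = p + j + 1 by ring, show q + (j + 1) = q + j + 1 by ring,
    ferrersRookSum_succ_succ_succ, show p + j + 1 - j = p + 1 by omega, add_mul, add_mul,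
    last_column_empty, bottom_row_free, bottom_row_taken,
    show p + q + 2 * (j + 1) = p + q + 2 * j + 1 + 1 by ring,
    Nat.factorial_succ (p + q + 2 * j + 1)]
  ring

open Finset in
theorem stmt_6 (n k : ℕ) (hk : k ≤ n) :
    (∑ lam ∈ (univ : Finset (Fin n → Fin (n + 1))).filter
        (fun lam => ∀ i j : Fin n, i ≤ j → lam j ≤ lam i),
      ((univ : Finset (Finset (Fin n × Fin n))).filter (fun P =>
        P.card = k ∧ (∀ c ∈ P, (c.2 : ℕ) < (lam c.1 : ℕ)) ∧
        (∀ c ∈ P, ∀ c' ∈ P, c ≠ c' → c.1 ≠ c'.1 ∧ c.2 ≠ c'.2))).card) *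
      (2 ^ k * k.factorial * (n - k).factorial * (n - k).factorial) =
    (2 * n).factorial := by
  obtain ⟨p, rfl⟩ := Nat.exists_eq_add_of_le' hk
  rw [Nat.add_sub_cancel, show 2 * (p + k) = p + p + 2 * k by ring,
    ← ferrersRookSum_add_add_mul p p k]
  congr 1
  refine sum_congr rfl fun lam _ => congrArg card ?_
  ext P
  rw [mem_filter, ← injOn_fst_and_injOn_snd_iff, mem_rookPlacements]
  simp only [ferrersBoard, subset_iff, mem_filter, mem_univ, true_and]
  tauto
end

section
/- With [q,p] = i and T_1 = pq + qp, the symmetrized product T_2 := T_1² + p²q² + q²p² satisfies T_2 = (3/2)(T_1² − 1) = (3/2) S_2(T_1). -/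
theorem stmt_10 {A : Type*} [Ring A] [Algebra ℂ A] (q p : A)
    (h : q * p - p * q = algebraMap ℂ A Complex.I) :
    (p * q + q * p) ^ 2 + p ^ 2 * q ^ 2 + q ^ 2 * p ^ 2 =
      ((3 : ℂ) / 2) • ((p * q + q * p) ^ 2 - 1) := by
  set c : A := algebraMap ℂ A Complex.I with hc
  have hqp : q * p = p * q + c := by rw [← h]; noncomm_ring
  have hcp : c * p = p * c := (Algebra.commutes _ _)
  have hcq : c * q = q * c := (Algebra.commutes _ _)
  have hc2 : c * c = -1 := by
    rw [hc, ← map_mul, Complex.I_mul_I, map_neg, map_one]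
  have h1 : p ^ 2 * q ^ 2 = (p * q) * (p * q) - c * (p * q) := by
    calc p ^ 2 * q ^ 2 = p * ((q * p) - c) * q := by rw [hqp]; noncomm_ring
      _ = (p * q) * (p * q) - (p * c) * q := by noncomm_ring
      _ = (p * q) * (p * q) - c * (p * q) := by rw [← hcp]; noncomm_ring
  have h2 : q ^ 2 * p ^ 2 = (q * p) * (q * p) + c * (q * p) := by
    calc q ^ 2 * p ^ 2 = q * ((p * q) + c) * p := by rw [← hqp]; noncomm_ring
      _ = (q * p) * (q * p) + (q * c) * p := by noncomm_ring
      _ = (q * p) * (q * p) + c * (q * p) := by rw [← hcq]; noncomm_ring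
  rw [h1, h2, hqp]
  apply smul_right_injective A (two_ne_zero (α := ℂ))
  show (2:ℂ) • _ = (2:ℂ) • ((3:ℂ)/2) • _
  rw [smul_smul, show (2:ℂ)*((3:ℂ)/2) = 3 by norm_num]
  rw [Algebra.smul_def, Algebra.smul_def, map_ofNat, map_ofNat]
  have key : ∀ x y : A, y * y = -1 →
      (2 : A) * ((x + (x + y)) ^ 2 + (x * x - y * x) + ((x + y) * (x + y) + y * (x + y))) =
        (3 : A) * ((x + (x + y)) ^ 2 - 1) := by
    intro x y hy
    have e1 : (2 : A) * ((x + (x + y)) ^ 2 + (x * x - y * x) + ((x + y) * (x + y) + y * (x + y)))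
        = 12 * (x * x) + 6 * (x * y) + 6 * (y * x) + 6 * (y * y) := by noncomm_ring
    have e2 : (3 : A) * ((x + (x + y)) ^ 2 - 1)
        = 12 * (x * x) + 6 * (x * y) + 6 * (y * x) + 3 * (y * y) + 3 * (-1) := by noncomm_ring
    rw [e1, e2, hy]
    noncomm_ring
  exact key (p * q) c hc2
end

section
/- Let q, p satisfy [q,p] = i and set T_1 = qp + pq. Then Σ_{k=0}^{n} C(n,k) q^k p^n q^{n−k} = S_n(T_1), where S_n is defined by S_0=1, S_1(x)=x, S_{n+1}(x)= x S_n(x) − n² S_{n−1}(x). -/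
open Finset LinearMap

/-!
Write `D x = q x + x q` and `c = [q, p]`. The binomial theorem for the commuting maps `x ↦ q x`
and `x ↦ x q` identifies the sum with `W n = Dⁿ (pⁿ)`. Since `D (p x) = p D x + c x`, and
`ad q = [q, ·]` commutes with `D` and satisfies `[q, pⁿ⁺¹] = (n + 1) c pⁿ`, one gets
`W (n + 1) = p D (W n) + (n + 1) c W n` and `[q, W (n + 1)] = (n + 1) c D (W n)`. Eliminating
`p D (W n)` gives `W (n + 2) = (q p + p q) W (n + 1) + ((n + 1) c)² W n`, which for `c = i` is the
recurrence of `S`, and `W 0 = 1`, `W 1 = q p + p q`.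
-/

section
variable {R A : Type*} [CommRing R] [Ring A] [Algebra R A]

theorem pow_succ_mul_eq_of_commutator {a b : A} {c : R}
    (h : a * b - b * a = algebraMap R A c) (m : ℕ) :
    a ^ (m + 1) * b = b * a ^ (m + 1) + ((m + 1 : R) * c) • a ^ m := by
  have hab : a * b = b * a + c • 1 := by rw [← Algebra.algebraMap_eq_smul_one, ← h]; abel
  induction m with
  | zero => simpa using hab
  | succ m ih =>
    rw [pow_succ' a (m + 1), mul_assoc, ih, mul_add, ← mul_assoc, hab, mul_smul_comm,
      add_mul, smul_mul_assoc, one_mul, mul_assoc, ← pow_succ', ← pow_succ']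
    push_cast
    module

variable (R) in
def anticomm (q : A) : Module.End R A := mulLeft R q + mulRight R q

@[simp]
theorem anticomm_apply (q x : A) : anticomm R q x = q * x + x * q := rfl

theorem anticomm_pow_apply (q x : A) (n : ℕ) :
    (anticomm R q ^ n) x = ∑ k ∈ range (n + 1), (n.choose k : A) * (q ^ k * x * q ^ (n - k)) := by
  rw [anticomm, (commute_mulLeft_right q q).add_pow, LinearMap.sum_apply]
  refine sum_congr rfl fun k _ => ?_
  rw [pow_mulLeft, pow_mulRight, Module.End.mul_apply, Module.End.natCast_apply,
    Module.End.mul_apply, mulLeft_apply, mulRight_apply, nsmul_eq_mul, mul_assoc,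
    (Nat.cast_commute (n.choose k) (q ^ k)).symm.left_comm, mul_assoc (q ^ k)]

variable {q p : A} {c : R}

theorem anticomm_mul_mulLeft_sub_mulLeft_mul (h : q * p - p * q = algebraMap R A c) :
    anticomm R q * mulLeft R p - mulLeft R p * anticomm R q = algebraMap R (Module.End R A) c := by
  ext x
  simp only [LinearMap.sub_apply, Module.End.mul_apply, anticomm_apply, mulLeft_apply,
    Module.algebraMap_end_apply, Algebra.smul_def, ← h]
  noncomm_ring

theorem anticomm_pow_succ_apply_mul (h : q * p - p * q = algebraMap R A c) (m : ℕ) (x : A) :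
    (anticomm R q ^ (m + 1)) (p * x) =
      p * (anticomm R q ^ (m + 1)) x + ((m + 1 : R) * c) • (anticomm R q ^ m) x := by
  simpa using
    congr($(pow_succ_mul_eq_of_commutator (anticomm_mul_mulLeft_sub_mulLeft_mul h) m) x)

theorem anticomm_pow_apply_commutator (q x : A) (n : ℕ) :
    q * (anticomm R q ^ n) x - (anticomm R q ^ n) x * q = (anticomm R q ^ n) (q * x - x * q) := by
  have hc : Commute (mulLeft R q - mulRight R q) (anticomm R q) :=
    ((Commute.refl _).add_right (commute_mulLeft_right q q)).sub_left
      ((commute_mulLeft_right q q).symm.add_right (Commute.refl _))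
  simpa using congr($((hc.pow_right n).eq) x)

theorem anticomm_pow_succ_apply_pow_succ (h : q * p - p * q = algebraMap R A c) (m : ℕ) :
    (anticomm R q ^ (m + 1)) (p ^ (m + 1)) =
      p * anticomm R q ((anticomm R q ^ m) (p ^ m)) +
        ((m + 1 : R) * c) • (anticomm R q ^ m) (p ^ m) := by
  rw [pow_succ' p m, anticomm_pow_succ_apply_mul h, pow_succ' (anticomm R q) m,
    Module.End.mul_apply]

theorem commutator_anticomm_pow_succ_apply_pow_succ (h : q * p - p * q = algebraMap R A c)
    (m : ℕ) :
    q * (anticomm R q ^ (m + 1)) (p ^ (m + 1)) - (anticomm R q ^ (m + 1)) (p ^ (m + 1)) * q =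
      ((m + 1 : R) * c) • anticomm R q ((anticomm R q ^ m) (p ^ m)) := by
  have hpq : p * q - q * p = algebraMap R A (-c) := by rw [map_neg, ← h, neg_sub]
  have hcomm : q * p ^ (m + 1) - p ^ (m + 1) * q = ((m + 1 : R) * c) • p ^ m := by
    rw [pow_succ_mul_eq_of_commutator hpq]; module
  rw [anticomm_pow_apply_commutator, hcomm, map_smul, pow_succ', Module.End.mul_apply]

theorem anticomm_pow_apply_pow_recurrence (h : q * p - p * q = algebraMap R A c) (n : ℕ) :
    (anticomm R q ^ (n + 2)) (p ^ (n + 2)) =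
      (q * p + p * q) * (anticomm R q ^ (n + 1)) (p ^ (n + 1)) +
        ((n + 1 : R) * c) ^ 2 • (anticomm R q ^ n) (p ^ n) := by
  have hW1 := anticomm_pow_succ_apply_pow_succ h n
  have hW2 := anticomm_pow_succ_apply_pow_succ h (n + 1)
  have hδ := commutator_anticomm_pow_succ_apply_pow_succ h n
  set W₀ := (anticomm R q ^ n) (p ^ n)
  set W₁ := (anticomm R q ^ (n + 1)) (p ^ (n + 1))
  have hqp : q * p = p * q + c • 1 := by rw [← Algebra.algebraMap_eq_smul_one, ← h]; abel
  rw [hW2, anticomm_apply, hqp]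
  have hpδ := congr(p * $hδ)
  rw [mul_sub, mul_smul_comm, anticomm_apply] at hpδ
  rw [anticomm_apply] at hW1
  simp only [add_mul, mul_add, smul_mul_assoc, one_mul, mul_assoc]
  push_cast
  linear_combination (norm := module) (-1 : R) • hpδ + ((n + 1 : R) * c) • hW1

end

open Finset in
theorem stmt_11 {A : Type*} [Ring A] [Algebra ℂ A] (q p : A)
    (h : q * p - p * q = algebraMap ℂ A Complex.I)
    (S : ℕ → Polynomial ℂ)
    (h0 : S 0 = 1) (h1 : S 1 = Polynomial.X)
    (hrec : ∀ n : ℕ, S (n + 2) =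
      Polynomial.X * S (n + 1) - Polynomial.C (((n : ℂ) + 1) ^ 2) * S n)
    (n : ℕ) :
    ∑ k ∈ range (n + 1), (n.choose k : A) * (q ^ k * p ^ n * q ^ (n - k)) =
      Polynomial.aeval (q * p + p * q) (S n) := by
  rw [← anticomm_pow_apply (R := ℂ)]
  induction n using Nat.twoStepInduction with
  | zero => simp [h0]
  | one => simp [h1]
  | more n ih₀ ih₁ =>
    rw [anticomm_pow_apply_pow_recurrence h, ih₀, ih₁, hrec, map_sub, map_mul, map_mul,
      Polynomial.aeval_X, Polynomial.aeval_C, ← Algebra.smul_def, mul_pow, Complex.I_sq]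
    module
end

section
/- In a ring with D, U satisfying DU − UD = 1, Σ_{k=0}^{n} C(n,k) D^k U^n D^{n−k} = Σ_{j=0}^{n} C(n,j) · 2^{n−j} · (n!/(n−j)!) · U^{n−j} D^{n−j}. -/
/-!
With `L`, `R` left and right multiplication by `D` and `ad = L - R`, the left-hand side is
`(L + R)^n` applied to `U^n`, since `L` and `R` commute. As `ad` commutes with `R` too, expanding
`(L + R)^n = (ad + 2R)^n` binomially gives `∑ C(n,j) 2^(n-j) ad^j(U^n) D^(n-j)`, and `[D, U] = 1`
makes `ad` act on powers of `U` as `d/dU`, so `ad^j(U^n) = n!/(n-j)! U^(n-j)`.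
-/

open Finset LinearMap LieAlgebra

attribute [local instance] LieRing.ofAssociativeRing LieAlgebra.ofAssociativeAlgebra

section
variable {A : Type*} [Ring A]

theorem lie_pow_succ_of_lie_eq_one {D U : A} (h : ⁅D, U⁆ = 1) (m : ℕ) :
    ⁅D, U ^ (m + 1)⁆ = (m + 1) • U ^ m := by
  induction m with
  | zero => simpa using h
  | succ m ih =>
    rw [Ring.lie_def] at *
    calc D * U ^ (m + 1 + 1) - U ^ (m + 1 + 1) * D
        = (D * U ^ (m + 1) - U ^ (m + 1) * D) * U + U ^ (m + 1) * (D * U - U * D) := by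
          noncomm_ring
      _ = (m + 1 + 1) • U ^ (m + 1) := by
          rw [ih, h, smul_mul_assoc, ← pow_succ, mul_one, ← succ_nsmul]

theorem ad_pow_apply_pow_of_lie_eq_one {D U : A} (h : ⁅D, U⁆ = 1) (n j : ℕ) :
    (ad ℤ A D ^ j) (U ^ n) = n.descFactorial j • U ^ (n - j) := by
  induction j with
  | zero => simp
  | succ j ih =>
    rw [pow_succ', Module.End.mul_apply, ih, map_nsmul, ad_apply, Nat.descFactorial_succ,
      mul_nsmul]
    rcases Nat.lt_or_ge j n with hj | hj
    · obtain ⟨m, hm⟩ : ∃ m, n - j = m + 1 := ⟨n - j - 1, by omega⟩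
      rw [hm, lie_pow_succ_of_lie_eq_one h, show n - (j + 1) = m by omega]
    · simp [Nat.sub_eq_zero_of_le hj, Ring.lie_def]

theorem ad_eq_mulLeft_sub_mulRight (a : A) : ad ℤ A a = mulLeft ℤ a - mulRight ℤ a :=
  congr_fun (ad_eq_lmul_left_sub_lmul_right A) a

theorem commute_ad_mulRight (a : A) : Commute (ad ℤ A a) (mulRight ℤ a) := by
  rw [ad_eq_mulLeft_sub_mulRight]
  exact (commute_mulLeft_right a a).sub_left (Commute.refl _)

theorem ad_pow_apply_mul_pow (a x : A) (j m : ℕ) :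
    (ad ℤ A a ^ j) (x * a ^ m) = (ad ℤ A a ^ j) x * a ^ m := by
  simpa [pow_mulRight] using congr($(((commute_ad_mulRight a).pow_pow j m).eq) x)

theorem sum_choose_mul_pow_mul_mul_pow (a x : A) (n : ℕ) :
    ∑ k ∈ range (n + 1), (n.choose k : A) * (a ^ k * x * a ^ (n - k)) =
      ((mulLeft ℤ a + mulRight ℤ a) ^ n) x := by
  rw [(commute_mulLeft_right a a).add_pow, LinearMap.sum_apply]
  refine sum_congr rfl fun k _ => ?_
  simp [pow_mulLeft, pow_mulRight, mul_assoc, Nat.cast_comm]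

theorem mulLeft_add_mulRight_pow_apply (a x : A) (n : ℕ) :
    ((mulLeft ℤ a + mulRight ℤ a) ^ n) x =
      ∑ j ∈ range (n + 1), (n.choose j * 2 ^ (n - j)) • ((ad ℤ A a ^ j) x * a ^ (n - j)) := by
  have hsplit : mulLeft ℤ a + mulRight ℤ a = ad ℤ A a + 2 • mulRight ℤ a := by
    rw [ad_eq_mulLeft_sub_mulRight, two_nsmul]; abel
  rw [hsplit, ((commute_ad_mulRight a).smul_right 2).add_pow, LinearMap.sum_apply]
  refine sum_congr rfl fun j _ => ?_
  simp only [Module.End.mul_apply, Module.End.natCast_apply, smul_pow, LinearMap.smul_apply,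
    pow_mulRight, mulRight_apply, map_nsmul, ad_pow_apply_mul_pow, smul_smul]

end

open Finset in
theorem stmt_12 {A : Type*} [Ring A] (D U : A) (h : D * U - U * D = 1) (n : ℕ) :
    ∑ k ∈ range (n + 1), (n.choose k : A) * (D ^ k * U ^ n * D ^ (n - k)) =
    ∑ j ∈ range (n + 1), ((n.choose j * 2 ^ (n - j) * n.descFactorial j : ℕ) : A) *
      (U ^ (n - j) * D ^ (n - j)) := by
  rw [sum_choose_mul_pow_mul_mul_pow, mulLeft_add_mulRight_pow_apply]
  refine sum_congr rfl fun j _ => ?_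
  rw [ad_pow_apply_pow_of_lie_eq_one h, smul_mul_assoc, smul_smul, nsmul_eq_mul]
end

section
/- For natural numbers n, l, and 0 ≤ j ≤ n: Σ_{k=j}^{n} C(n+l,k) · C(n+l,k+l) · C(k,j) · (n!/(n−j)!) = C(n,j) · ((n+l)!/(n+l−j)!) · C(2n+2l−j, n−j). -/
open Finset

/-- Vandermonde's convolution: after `k = j + m`, `C(n + l, k + l) = C(n + l, n - j - m)`. -/
theorem Nat.sum_Icc_choose_sub_mul_choose_add (a n l j : ℕ) (hj : j ≤ n) :
    ∑ k ∈ Icc j n, a.choose (k - j) * (n + l).choose (k + l) = (a + (n + l)).choose (n - j) := by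
  rw [Nat.add_choose_eq, Nat.sum_antidiagonal_eq_sum_range_succ_mk, ← Ico_add_one_right_eq_Icc,
    sum_Ico_eq_sum_range, show n + 1 - j = n - j + 1 by omega]
  refine sum_congr rfl fun m hm => ?_
  rw [mem_range] at hm
  rw [Nat.add_sub_cancel_left, show j + m + l = n + l - (n - j - m) by omega,
    Nat.choose_symm (by omega)]

theorem Nat.choose_mul_descFactorial_comm (n m j : ℕ) :
    n.choose j * m.descFactorial j = m.choose j * n.descFactorial j := by
  rw [Nat.descFactorial_eq_factorial_mul_choose, Nat.descFactorial_eq_factorial_mul_choose]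
  ring

open Finset in
theorem stmt_15 (n l j : ℕ) (hj : j ≤ n) :
    ∑ k ∈ Finset.Icc j n,
        (n + l).choose k * (n + l).choose (k + l) * k.choose j * n.descFactorial j =
      n.choose j * (n + l).descFactorial j * (2 * n + 2 * l - j).choose (n - j) := by
  have trinomial_revision : ∀ k ∈ Icc j n,
      (n + l).choose k * (n + l).choose (k + l) * k.choose j * n.descFactorial j =
        (n + l).choose j * n.descFactorial j *
          ((n + l - j).choose (k - j) * (n + l).choose (k + l)) := by
    intro k hk
    rw [mul_right_comm _ _ (k.choose j), Nat.choose_mul (mem_Icc.1 hk).1]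
    ring
  rw [sum_congr rfl trinomial_revision, ← mul_sum, Nat.sum_Icc_choose_sub_mul_choose_add _ _ _ _ hj,
    show n + l - j + (n + l) = 2 * n + 2 * l - j by omega, Nat.choose_mul_descFactorial_comm]
end

section
/- Let q, p satisfy [q,p] = i, T_1 = qp + pq, and let l be a natural number. Define the ordering O(q^n p^n) = [Σ_{k=0}^n C(n+l,k) C(n+l,k+l) q^k p^n q^{n−k}] / [Σ_{k=0}^n C(n+l,k) C(n+l,k+l)]. Then O(q^n p^n) = P_n(T_1/2), where P_n(x) = i^n · C(2n+2l,n)^{−1} · ((n+l)!/l!) · Σ_{k=0}^{n} [(−n)_k (n+2l+1)_k (1/2 + i x)_k] / [(1)_k (l+1)_k k!] (the terminating ₃F₂ continuous Hahn polynomial). -/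
/-!
Write `N = q p`. From `[q, p] = i` one gets `q f(N) = f(N + i) q` and `p f(N) = f(N - i) p`, so
`q^k p^k` and `p^m q^m` are the polynomials `∏_{r<k} (N + r i)` and `g_m(N) = ∏_{a<m} (N - (a+1) i)`,
and `q^k p^n q^(n-k)` is their product. In the basis `g_m` that product has coefficients
`n^{(s)} C(k, s) i^s` (falling factorial), and summing against the weights `C(n+l, k) C(n+l, k+l)`
collapses by Vandermonde to `n^{(s)} C(n+l, s) C(2n+2l-s, n-s) i^s`. On the other side
`1/2 + j + i T_1/2 = i (N - (j+1) i)`, so `(1/2 + i T_1/2)_m = i^m g_m(N)`, and matching the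
coefficients of `g_m` is an identity between factorials.
-/

open Finset Polynomial

theorem SemiconjBy.aeval {R A : Type*} [CommSemiring R] [Semiring A] [Algebra R A]
    {x a b : A} (h : SemiconjBy x a b) (f : R[X]) :
    SemiconjBy x (aeval a f) (aeval b f) := by
  induction f using Polynomial.induction_on with
  | C r =>
    simp only [aeval_C]
    exact Algebra.commute_algebraMap_right r x
  | add f g hf hg => simpa only [map_add] using hf.add_right hg
  | monomial k r ih =>
    simpa only [map_mul, map_pow, aeval_C, aeval_X] using
      SemiconjBy.mul_right (Algebra.commute_algebraMap_right r x) (h.pow_right (k + 1))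

theorem Nat.sum_range_choose_mul_choose_mul_choose (a : ℕ) {n s : ℕ} (hs : s ≤ n) :
    ∑ k ∈ range (n + 1), a.choose k * k.choose s * a.choose (n - k) =
      a.choose s * (a - s + a).choose (n - s) := by
  rw [show n + 1 = s + (n - s + 1) by omega, sum_range_add, Nat.add_choose_eq,
    Nat.sum_antidiagonal_eq_sum_range_succ_mk, mul_sum]
  have hlow : ∑ k ∈ range s, a.choose k * k.choose s * a.choose (n - k) = 0 :=
    sum_eq_zero fun k hk => by rw [Nat.choose_eq_zero_of_lt (mem_range.1 hk), mul_zero, zero_mul]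
  rw [hlow, zero_add]
  refine sum_congr rfl fun x _ => ?_
  rw [Nat.choose_mul (Nat.le_add_right s x), Nat.add_sub_cancel_left, Nat.sub_sub, mul_assoc]

theorem Nat.sum_range_choose_mul_choose_add_mul_choose (n l : ℕ) {s : ℕ} (hs : s ≤ n) :
    ∑ k ∈ range (n + 1), (n + l).choose k * (n + l).choose (k + l) * k.choose s =
      (n + l).choose s * (2 * n + 2 * l - s).choose (n - s) := by
  rw [show 2 * n + 2 * l - s = n + l - s + (n + l) by omega,
    ← Nat.sum_range_choose_mul_choose_mul_choose (n + l) hs]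
  refine sum_congr rfl fun k hk => ?_
  rw [Nat.choose_symm_of_eq_add (show n + l = k + l + (n - k) by have := mem_range.1 hk; omega)]
  ring

theorem Nat.sum_range_choose_mul_choose_add (n l : ℕ) :
    ∑ k ∈ range (n + 1), (n + l).choose k * (n + l).choose (k + l) = (2 * n + 2 * l).choose n := by
  simpa using Nat.sum_range_choose_mul_choose_add_mul_choose n l (Nat.zero_le n)

theorem prod_range_add_natCast {R : Type*} [CommSemiring R] (x : R) (m : ℕ) :
    ∏ j ∈ range m, (x + j) = (ascPochhammer R m).eval x := by
  induction m with
  | zero => simp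
  | succ m ih => rw [prod_range_succ, ih, ascPochhammer_succ_eval]

theorem prod_range_neg_natCast_add {R : Type*} [CommRing R] (n m : ℕ) :
    ∏ j ∈ range m, (-(n : R) + j) = (-1) ^ m * n.descFactorial m := by
  rw [prod_range_add_natCast, ascPochhammer_eval_neg_eq_descPochhammer,
    descPochhammer_eval_eq_descFactorial]

theorem prod_range_natCast_add_one_add {K : Type*} [Field K] [CharZero K] (a m : ℕ) :
    ∏ j ∈ range m, ((a : K) + 1 + j) = (a + m).factorial / a.factorial := by
  rw [eq_div_iff (Nat.cast_ne_zero.2 (Nat.factorial_ne_zero a)), prod_range_add_natCast, mul_comm,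
    ← Nat.cast_add_one, ← Nat.cast_ascFactorial]
  exact_mod_cast Nat.factorial_mul_ascFactorial a m

theorem prod_range_one_add_natCast {R : Type*} [CommSemiring R] (m : ℕ) :
    ∏ j ∈ range m, (1 + (j : R)) = m.factorial := by
  rw [← prod_range_add_one_eq_factorial]
  push_cast
  exact prod_congr rfl fun j _ => add_comm _ _

theorem natCast_descFactorial_eq_div {K : Type*} [Field K] [CharZero K] {n m : ℕ} (h : m ≤ n) :
    (n.descFactorial m : K) = n.factorial / (n - m).factorial := by
  rw [eq_div_iff (Nat.cast_ne_zero.2 (Nat.factorial_ne_zero _)), mul_comm]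
  exact_mod_cast Nat.factorial_mul_descFactorial h

namespace CCR

variable {R : Type*} [CommRing R] (c : R)

noncomputable def qpPoly (k : ℕ) : R[X] := ∏ r ∈ range k, (X + C (r * c))

noncomputable def pqPoly (m : ℕ) : R[X] := ∏ a ∈ range m, (X - C ((a + 1) * c))

theorem qpPoly_succ (k : ℕ) : qpPoly c (k + 1) = (qpPoly c k).comp (X + C c) * X := by
  rw [qpPoly, qpPoly, Polynomial.prod_comp, prod_range_succ']
  simp only [add_comp, X_comp, C_comp, Nat.cast_zero, zero_mul, map_zero, add_zero]
  congr 1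
  exact prod_congr rfl fun r _ => by rw [add_assoc, ← C_add]; push_cast; ring_nf

theorem pqPoly_succ (m : ℕ) :
    pqPoly c (m + 1) = (pqPoly c m).comp (X - C c) * (X - C c) := by
  rw [pqPoly, pqPoly, Polynomial.prod_comp, prod_range_succ']
  simp only [sub_comp, X_comp, C_comp, Nat.cast_zero, zero_add, one_mul]
  congr 1
  exact prod_congr rfl fun r _ => by rw [sub_sub, ← C_add]; push_cast; ring_nf

theorem pqPoly_mul_X_add_C (j : ℕ) (d : R) :
    pqPoly c j * (X + C d) = pqPoly c (j + 1) + C (d + (j + 1) * c) * pqPoly c j := by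
  rw [pqPoly, pqPoly, prod_range_succ, C_add]; ring

theorem descFactorial_mul_choose_succ_succ {k s : ℕ} (m : ℕ) (hs : s ≤ k) :
    ((k + 1 + m).descFactorial (s + 1) : R) * (k + 1).choose (s + 1) =
      ((k + m).descFactorial (s + 1) : R) * k.choose (s + 1) +
        ((k + m).descFactorial s : R) * k.choose s * (k + (k + m - s : ℕ) + 1) := by
  obtain ⟨u, rfl⟩ := Nat.exists_eq_add_of_le hs
  have hc : ((s + u).choose (s + 1) : R) * (s + 1) = (s + u).choose s * u := by
    simpa using congrArg (Nat.cast (R := R)) (Nat.choose_succ_right_eq (s + u) s)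
  rw [show s + u + 1 + m = (s + u + m) + 1 by omega, Nat.succ_descFactorial_succ,
    Nat.descFactorial_succ, Nat.choose_succ_succ', show s + u + m - s = u + m by omega]
  push_cast
  linear_combination ((s + u + m).descFactorial s : R) * hc

theorem qpPoly_mul_pqPoly (k m : ℕ) :
    qpPoly c k * pqPoly c m = ∑ s ∈ range (k + 1),
      C (((k + m).descFactorial s : R) * k.choose s * c ^ s) * pqPoly c (k + m - s) := by
  induction k with
  | zero => simp [qpPoly]
  | succ k ih =>
    set E : ℕ → R := fun s => ((k + m).descFactorial s : R) * k.choose s * c ^ s with hE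
    have hshift : ∑ s ∈ range (k + 1), C (E s) * pqPoly c (k + m - s + 1) =
        C (E 0) * pqPoly c (k + 1 + m) + ∑ s ∈ range (k + 1), C (E (s + 1)) * pqPoly c (k + m - s) := by
      have hEk : E (k + 1) = 0 := by simp [hE]
      rw [sum_range_succ', sum_range_succ (fun s => C (E (s + 1)) * _), hEk, add_comm,
        show k + m - 0 + 1 = k + 1 + m by omega]
      simp only [map_zero, zero_mul, add_zero]
      congr 1
      exact sum_congr rfl fun s hs => by rw [show k + m - (s + 1) + 1 = k + m - s by
        have := mem_range.1 hs; omega]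
    calc qpPoly c (k + 1) * pqPoly c m
        = ∑ s ∈ range (k + 1), C (E s) * (pqPoly c (k + m - s) * (X + C (k * c))) := by
          rw [qpPoly, prod_range_succ, ← qpPoly, mul_right_comm, ih, sum_mul]
          exact sum_congr rfl fun s _ => mul_assoc _ _ _
      _ = ∑ s ∈ range (k + 1), (C (E s) * pqPoly c (k + m - s + 1) +
            C (E s * (k * c + ((k + m - s : ℕ) + 1) * c)) * pqPoly c (k + m - s)) := by
          refine sum_congr rfl fun s _ => ?_
          rw [pqPoly_mul_X_add_C, mul_add, ← mul_assoc, ← C_mul]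
      _ = C (E 0) * pqPoly c (k + 1 + m) + ∑ s ∈ range (k + 1),
            C (E (s + 1) + E s * (k * c + ((k + m - s : ℕ) + 1) * c)) * pqPoly c (k + m - s) := by
          simp only [sum_add_distrib, hshift, C_add, add_mul, add_assoc]
      _ = _ := by
          rw [sum_range_succ' _ (k + 1), add_comm]
          congr 1
          · refine sum_congr rfl fun s hs => ?_
            have hs := mem_range.1 hs
            rw [show k + 1 + m - (s + 1) = k + m - s by omega, hE,
              descFactorial_mul_choose_succ_succ m (by omega)]
            congr 2
            ring
          · simp [hE]

theorem sum_natCast_mul_qpPoly_mul_pqPoly (w : ℕ → ℕ) (n : ℕ) :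
    ∑ k ∈ range (n + 1), (w k : R[X]) * (qpPoly c k * pqPoly c (n - k)) =
      ∑ s ∈ range (n + 1), C ((n.descFactorial s : R) *
        ((∑ k ∈ range (n + 1), w k * k.choose s : ℕ) : R) * c ^ s) * pqPoly c (n - s) := by
  have hterm : ∀ k ∈ range (n + 1), (w k : R[X]) * (qpPoly c k * pqPoly c (n - k)) =
      ∑ s ∈ range (n + 1),
        C ((n.descFactorial s : R) * ((w k * k.choose s : ℕ) : R) * c ^ s) * pqPoly c (n - s) := by
    intro k hk
    have hk : k ≤ n := Nat.lt_succ_iff.1 (mem_range.1 hk)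
    rw [qpPoly_mul_pqPoly, Nat.add_sub_cancel' hk, mul_sum]
    refine sum_subset (range_subset_range.2 (Nat.succ_le_succ hk)) (fun s _ hs => ?_) |>.trans ?_
    · rw [Nat.choose_eq_zero_of_lt (by simp at hs; omega)]
      simp
    · refine sum_congr rfl fun s _ => ?_
      rw [← C_eq_natCast, ← mul_assoc, ← C_mul]
      push_cast
      congr 2
      ring
  rw [sum_congr rfl hterm, sum_comm]
  refine sum_congr rfl fun s _ => ?_
  rw [← sum_mul, ← map_sum, ← sum_mul, ← mul_sum, Nat.cast_sum]

variable {A : Type*} [Ring A] [Algebra R A] {c} {q p : A}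

theorem semiconjBy_left_mul (h : q * p - p * q = algebraMap R A c) :
    SemiconjBy q (q * p) (q * p + algebraMap R A c) :=
  calc q * (q * p) = q * p * q + q * (q * p - p * q) := by noncomm_ring
    _ = (q * p + algebraMap R A c) * q := by rw [h, ← Algebra.commutes, add_mul]

theorem semiconjBy_right_mul (h : q * p - p * q = algebraMap R A c) :
    SemiconjBy p (q * p) (q * p - algebraMap R A c) := by
  rw [SemiconjBy, ← h]; noncomm_ring

theorem pow_mul_pow_eq_aeval_qpPoly (h : q * p - p * q = algebraMap R A c) (k : ℕ) :
    q ^ k * p ^ k = aeval (q * p) (qpPoly c k) := by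
  induction k with
  | zero => simp [qpPoly]
  | succ k ih =>
    calc q ^ (k + 1) * p ^ (k + 1) = q * (q ^ k * p ^ k) * p := by
          rw [pow_succ', pow_succ]; noncomm_ring
      _ = aeval (q * p + algebraMap R A c) (qpPoly c k) * (q * p) := by
          rw [ih, (semiconjBy_left_mul h).aeval, mul_assoc]
      _ = aeval (q * p) (qpPoly c (k + 1)) := by
          rw [qpPoly_succ, map_mul, aeval_comp, aeval_X, map_add, aeval_X, aeval_C]

theorem pow_mul_pow_eq_aeval_pqPoly (h : q * p - p * q = algebraMap R A c) (m : ℕ) :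
    p ^ m * q ^ m = aeval (q * p) (pqPoly c m) := by
  induction m with
  | zero => simp [pqPoly]
  | succ m ih =>
    calc p ^ (m + 1) * q ^ (m + 1) = p * (p ^ m * q ^ m) * q := by
          rw [pow_succ', pow_succ]; noncomm_ring
      _ = aeval (q * p - algebraMap R A c) (pqPoly c m) * (q * p - algebraMap R A c) := by
          rw [ih, (semiconjBy_right_mul h).aeval, mul_assoc, ← h, sub_sub_cancel]
      _ = aeval (q * p) (pqPoly c (m + 1)) := by
          rw [pqPoly_succ, map_mul, aeval_comp, map_sub, aeval_X, aeval_C]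

theorem pow_mul_pow_mul_pow_eq_aeval (h : q * p - p * q = algebraMap R A c) {k n : ℕ}
    (hk : k ≤ n) : q ^ k * p ^ n * q ^ (n - k) = aeval (q * p) (qpPoly c k * pqPoly c (n - k)) := by
  rw [map_mul, ← pow_mul_pow_eq_aeval_qpPoly h, ← pow_mul_pow_eq_aeval_pqPoly h,
    ← Nat.add_sub_cancel' hk, pow_add, Nat.add_sub_cancel_left]
  noncomm_ring

end CCR

open CCR

/-- The coefficient of `(1/2 + i x)_k` in `P_n(x)`; the four products are the Pochhammer symbols
`(-n)_k`, `(n+2l+1)_k`, `(1)_k` and `(l+1)_k`. -/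
noncomputable def hahnCoeff (n l k : ℕ) : ℂ :=
  Complex.I ^ n * (((2 * n + 2 * l).choose n : ℂ))⁻¹ *
    (((n + l).factorial : ℂ) / (l.factorial : ℂ)) *
    (∏ j ∈ range k, (-(n : ℂ) + (j : ℂ))) *
    (∏ j ∈ range k, ((n : ℂ) + 2 * (l : ℂ) + 1 + (j : ℂ))) /
    ((∏ j ∈ range k, (1 + (j : ℂ))) * (∏ j ∈ range k, ((l : ℂ) + 1 + (j : ℂ))) *
      (k.factorial : ℂ))

theorem hahnCoeff_mul_I_pow (l : ℕ) {n m : ℕ} (hm : m ≤ n) :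
    hahnCoeff n l m * Complex.I ^ m = ((2 * n + 2 * l).choose n : ℂ)⁻¹ *
      (n.descFactorial (n - m) * (n + l).choose (n - m) * (2 * n + 2 * l - (n - m)).choose m) *
        Complex.I ^ (n - m) := by
  obtain ⟨t, rfl⟩ := Nat.exists_eq_add_of_le hm
  have hI : Complex.I ^ (m + t) * (-1) ^ m * Complex.I ^ m = Complex.I ^ t := by
    have : (Complex.I * Complex.I * -1) ^ m = 1 := by simp
    linear_combination (Complex.I ^ t) * this
  have hprod : ∏ j ∈ range m, ((m + t : ℕ) + 2 * (l : ℂ) + 1 + j) =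
      (m + t + 2 * l + m).factorial / (m + t + 2 * l).factorial := by
    rw [← prod_range_natCast_add_one_add]; push_cast; rfl
  rw [hahnCoeff, prod_range_neg_natCast_add, hprod, prod_range_natCast_add_one_add,
    prod_range_one_add_natCast, Nat.add_sub_cancel_left, natCast_descFactorial_eq_div hm,
    natCast_descFactorial_eq_div (Nat.le_add_left t m), Nat.add_sub_cancel_left,
    Nat.cast_choose ℂ (show t ≤ m + t + l by omega),
    Nat.cast_choose ℂ (show m ≤ 2 * (m + t) + 2 * l - t by omega),
    show 2 * (m + t) + 2 * l - t - m = m + t + 2 * l by omega,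
    show 2 * (m + t) + 2 * l - t = m + t + 2 * l + m by omega,
    show m + t + l - t = l + m by omega, Nat.add_sub_cancel, ← hI]
  have hfact (a : ℕ) : (a.factorial : ℂ) ≠ 0 := Nat.cast_ne_zero.2 (Nat.factorial_ne_zero a)
  field_simp [hfact]

theorem sum_weighted_qpPoly_mul_pqPoly_eq_sum_hahnCoeff (n l : ℕ) :
    ((∑ k ∈ range (n + 1), (n + l).choose k * (n + l).choose (k + l) : ℕ) : ℂ)⁻¹ •
        ∑ k ∈ range (n + 1), (((n + l).choose k * (n + l).choose (k + l) : ℕ) : ℂ[X]) *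
          (qpPoly Complex.I k * pqPoly Complex.I (n - k)) =
      ∑ m ∈ range (n + 1), hahnCoeff n l m • (C (Complex.I ^ m) * pqPoly Complex.I m) := by
  rw [sum_natCast_mul_qpPoly_mul_pqPoly, Nat.sum_range_choose_mul_choose_add, ← sum_range_reflect,
    smul_sum]
  refine sum_congr rfl fun m hm => ?_
  have hm : m ≤ n := Nat.lt_succ_iff.1 (mem_range.1 hm)
  rw [Nat.add_sub_cancel, Nat.sum_range_choose_mul_choose_add_mul_choose n l (Nat.sub_le n m),
    Nat.sub_sub_self hm, smul_eq_C_mul, smul_eq_C_mul, ← mul_assoc, ← mul_assoc, ← C_mul,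
    ← C_mul, hahnCoeff_mul_I_pow l hm]
  push_cast
  congr 2
  ring

section Weyl

variable {A : Type*} [Ring A] [Algebra ℂ A] {q p : A}

theorem pochhammer_factor_eq_aeval (h : q * p - p * q = algebraMap ℂ A Complex.I) (z : ℂ) :
    algebraMap ℂ A ((1 : ℂ) / 2 + z) + (Complex.I / 2) • (q * p + p * q) =
      aeval (q * p) (C Complex.I * (X - C ((z + 1) * Complex.I))) := by
  have hpq : p * q = q * p - algebraMap ℂ A Complex.I := by rw [← h, sub_sub_cancel]
  simp only [hpq, map_mul, map_sub, aeval_X, aeval_C, Algebra.algebraMap_eq_smul_one, mul_sub,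
    smul_mul_assoc, one_mul]
  match_scalars
  · linear_combination (z + 1 / 2) * Complex.I_mul_I
  · ring

theorem pochhammer_eq_aeval (h : q * p - p * q = algebraMap ℂ A Complex.I) (k : ℕ) :
    ((List.range k).map (fun j =>
        algebraMap ℂ A ((1 : ℂ) / 2 + (j : ℂ)) + (Complex.I / 2) • (q * p + p * q))).prod =
      aeval (q * p) (C (Complex.I ^ k) * pqPoly Complex.I k) := by
  -- the list on the left is `List.range k` cast to `ℂ` through the list monad
  simp only [bind_pure_comp, List.map_eq_map, List.map_map, Function.comp_def,
    pochhammer_factor_eq_aeval h]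
  refine (List.prod_map_hom (List.range k) _ (aeval (q * p))).trans (congrArg _ ?_)
  -- `Finset.range k` is `List.range k` underneath
  change ∏ j ∈ range k, C Complex.I * (X - C ((j + 1) * Complex.I)) = _
  rw [prod_mul_distrib, prod_const, card_range, ← C_pow, pqPoly]

end Weyl

open Finset in
theorem stmt_16 {A : Type*} [Ring A] [Algebra ℂ A] (q p : A)
    (h : q * p - p * q = algebraMap ℂ A Complex.I) (n l : ℕ) :
    ((((∑ k ∈ range (n + 1), (n + l).choose k * (n + l).choose (k + l) : ℕ) : ℂ))⁻¹ •
        ∑ k ∈ range (n + 1), (((n + l).choose k * (n + l).choose (k + l) : ℕ) : A) *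
          (q ^ k * p ^ n * q ^ (n - k))) =
    ∑ k ∈ range (n + 1),
      (Complex.I ^ n * (((2 * n + 2 * l).choose n : ℂ))⁻¹ *
        (((n + l).factorial : ℂ) / (l.factorial : ℂ)) *
        (∏ j ∈ range k, (-(n : ℂ) + (j : ℂ))) *
        (∏ j ∈ range k, ((n : ℂ) + 2 * (l : ℂ) + 1 + (j : ℂ))) /
        ((∏ j ∈ range k, (1 + (j : ℂ))) * (∏ j ∈ range k, ((l : ℂ) + 1 + (j : ℂ))) *
          (k.factorial : ℂ))) •
      ((List.range k).map (fun j =>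
        algebraMap ℂ A ((1 : ℂ) / 2 + (j : ℂ)) +
          (Complex.I / 2) • (q * p + p * q))).prod := by
  have hlhs : ∀ k ∈ range (n + 1),
      (((n + l).choose k * (n + l).choose (k + l) : ℕ) : A) * (q ^ k * p ^ n * q ^ (n - k)) =
        aeval (q * p) ((((n + l).choose k * (n + l).choose (k + l) : ℕ) : ℂ[X]) *
          (qpPoly Complex.I k * pqPoly Complex.I (n - k))) := fun k hk => by
    rw [map_mul, map_natCast, pow_mul_pow_mul_pow_eq_aeval h (Nat.lt_succ_iff.1 (mem_range.1 hk))]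
  simp only [sum_congr rfl hlhs, pochhammer_eq_aeval h, ← map_sum, ← map_smul]
  exact congrArg _ (sum_weighted_qpPoly_mul_pqPoly_eq_sum_hahnCoeff n l)
end
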